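/- Let Γ⁰ be a subgroup of Γ, let Z ⊆ B be a ℂ-subalgebra such that v(z) ∈ Γ⁰ for every nonzero z ∈ Z, and let x₁, …, x_R ∈ B be nonzero elements such that for i ≠ j the elements v(xᵢ) and v(xⱼ) lie in distinct cosets of Γ⁰ in Γ. Then x₁, …, x_R are left linearly independent over Z: whenever z₁, …, z_R ∈ Z satisfy z₁ * x₁ + ⋯ + z_R * x_R = 0, one has zᵢ = 0 for all i. -/

import Mathlib

/-!
Since the structure constants `c k l` never vanish, the leading term of a product is the product
of the leading terms, so `v(z x) = v(z) + v(x)`. For nonzero `zᵢ ∈ Z` the valuation `v(zᵢ xᵢ)`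
therefore lies in the coset `v(xᵢ) + Γ⁰`, and the nonzero summands of `∑ zᵢ xᵢ` have pairwise
distinct valuations. The summand of largest valuation then contributes a coefficient that no
other summand can cancel, so a vanishing sum has only zero summands, and `zᵢ xᵢ = 0` forces
`zᵢ = 0` because `B` has no zero divisors.
-/

/-- The valuation (leading exponent) of an element of an algebra `B` that is free as a
`ℂ`-module with basis indexed by a linearly ordered group `Γ`: the maximum of the support of
the basis expansion, with value `⊥` exactly on `x = 0`. -/
noncomputable def val {Γ B : Type*} [AddCommGroup Γ] [LinearOrder Γ] [IsOrderedAddMonoid Γ] [Ring B] [Algebra ℂ B]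
    (Zb : Module.Basis Γ ℂ B) (x : B) : WithBot Γ :=
  (Zb.repr x).support.max

namespace Module.Basis

variable {Γ B : Type*} [AddCommGroup Γ] [Ring B] [Algebra ℂ B] (Zb : Module.Basis Γ ℂ B)

lemma repr_mul {c : Γ → Γ → ℂ} (hmul : ∀ k l, Zb k * Zb l = c k l • Zb (k + l)) (x y : B) :
    Zb.repr (x * y) = ∑ p ∈ (Zb.repr x).support ×ˢ (Zb.repr y).support,
      Finsupp.single (p.1 + p.2) (Zb.repr x p.1 * Zb.repr y p.2 * c p.1 p.2) := by
  conv_lhs => rw [← Zb.linearCombination_repr x, ← Zb.linearCombination_repr y]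
  simp only [Finsupp.linearCombination_apply, Finsupp.sum, Finset.sum_mul_sum, ← Finset.sum_product',
    smul_mul_smul_comm, hmul, smul_smul, map_sum, map_smul, Zb.repr_self, Finsupp.smul_single_one]

variable [LinearOrder Γ] [IsOrderedAddMonoid Γ]

lemma val_eq_bot_iff {x : B} : val Zb x = ⊥ ↔ x = 0 := by
  simp [val, Finset.max_eq_bot]

lemma repr_val_ne_zero {x : B} {k : Γ} (hk : val Zb x = k) : Zb.repr x k ≠ 0 :=
  Finsupp.mem_support_iff.mp (Finset.mem_of_max hk)

lemma le_val_of_repr_ne_zero {x : B} {m : Γ} (hm : Zb.repr x m ≠ 0) : (m : WithBot Γ) ≤ val Zb x :=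
  Finset.le_max (Finsupp.mem_support_iff.mpr hm)

lemma repr_eq_zero_of_val_lt {x : B} {m : Γ} (hm : val Zb x < m) : Zb.repr x m = 0 :=
  by_contra fun h => (Zb.le_val_of_repr_ne_zero h).not_gt hm

lemma val_eq_coe_of_repr {x : B} {k : Γ} (hk : Zb.repr x k ≠ 0)
    (habove : ∀ m, k < m → Zb.repr x m = 0) : val Zb x = k := by
  refine le_antisymm (Finset.max_le fun m hm => WithBot.coe_le_coe.mpr ?_)
    (Zb.le_val_of_repr_ne_zero hk)
  exact not_lt.mp fun hkm => Finsupp.mem_support_iff.mp hm (habove m hkm)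

lemma val_mul {c : Γ → Γ → ℂ} (hc : ∀ k l, c k l ≠ 0)
    (hmul : ∀ k l, Zb k * Zb l = c k l • Zb (k + l)) (x y : B) :
    val Zb (x * y) = val Zb x + val Zb y := by
  rcases eq_or_ne x 0 with rfl | hx
  · simp [Zb.val_eq_bot_iff.mpr rfl]
  rcases eq_or_ne y 0 with rfl | hy
  · simp [Zb.val_eq_bot_iff.mpr rfl]
  obtain ⟨k, hk⟩ := WithBot.ne_bot_iff_exists.mp (mt Zb.val_eq_bot_iff.mp hx)
  obtain ⟨l, hl⟩ := WithBot.ne_bot_iff_exists.mp (mt Zb.val_eq_bot_iff.mp hy)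
  have hk_le : ∀ k' ∈ (Zb.repr x).support, k' ≤ k := fun k' hk' =>
    WithBot.coe_le_coe.mp (hk ▸ Finset.le_max hk')
  have hl_le : ∀ l' ∈ (Zb.repr y).support, l' ≤ l := fun l' hl' =>
    WithBot.coe_le_coe.mp (hl ▸ Finset.le_max hl')
  have hk_mem : k ∈ (Zb.repr x).support := Finset.mem_of_max hk.symm
  have hl_mem : l ∈ (Zb.repr y).support := Finset.mem_of_max hl.symm
  classical
  rw [← hk, ← hl, ← WithBot.coe_add]
  refine Zb.val_eq_coe_of_repr ?_ fun m hm => ?_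
  · -- only the pair of leading exponents contributes to the coefficient of `k + l`
    rw [Zb.repr_mul hmul, Finsupp.finsetSum_apply, Finset.sum_eq_single_of_mem (k, l)
      (Finset.mem_product.mpr ⟨hk_mem, hl_mem⟩)]
    · simpa using ⟨⟨Finsupp.mem_support_iff.mp hk_mem, Finsupp.mem_support_iff.mp hl_mem⟩, hc k l⟩
    · rintro ⟨k', l'⟩ hp hne
      rw [Finset.mem_product] at hp
      rw [Finsupp.single_apply, if_neg fun h => hne ?_]
      simpa using (add_eq_add_iff_eq_and_eq (hk_le k' hp.1) (hl_le l' hp.2)).mp h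
  · rw [Zb.repr_mul hmul, Finsupp.finsetSum_apply]
    refine Finset.sum_eq_zero fun p hp => Finsupp.single_eq_of_ne ?_
    rw [Finset.mem_product] at hp
    exact ((add_le_add (hk_le _ hp.1) (hl_le _ hp.2)).trans_lt hm).ne'

lemma noZeroDivisors {c : Γ → Γ → ℂ} (hc : ∀ k l, c k l ≠ 0)
    (hmul : ∀ k l, Zb k * Zb l = c k l • Zb (k + l)) : NoZeroDivisors B where
  eq_zero_or_eq_zero_of_mul_eq_zero {x y} h := by
    simpa [Zb.val_eq_bot_iff] using (Zb.val_mul hc hmul x y).symm.trans (Zb.val_eq_bot_iff.mpr h)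

lemma val_mul_ne_of_sub_notMem {c : Γ → Γ → ℂ} (hc : ∀ k l, c k l ≠ 0)
    (hmul : ∀ k l, Zb k * Zb l = c k l • Zb (k + l)) {Γ0 : AddSubgroup Γ} {z z' x x' : B}
    {g g' k k' : Γ} (hg : g ∈ Γ0) (hg' : g' ∈ Γ0) (hz : val Zb z = g) (hz' : val Zb z' = g')
    (hx : val Zb x = k) (hx' : val Zb x' = k') (hk : k - k' ∉ Γ0) :
    val Zb (z * x) ≠ val Zb (z' * x') := by
  rw [Zb.val_mul hc hmul, Zb.val_mul hc hmul, hz, hz', hx, hx', ← WithBot.coe_add,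
    ← WithBot.coe_add, Ne, WithBot.coe_inj]
  intro h
  have hsub : k - k' = g' - g := sub_eq_sub_iff_add_eq_add.mpr (by rw [add_comm, h, add_comm])
  exact hk (hsub ▸ sub_mem hg' hg)

lemma eq_zero_of_sum_eq_zero_of_injOn_val {ι : Type*} {s : Finset ι} {y : ι → B}
    (hinj : Set.InjOn (fun i => val Zb (y i)) {i | i ∈ s ∧ y i ≠ 0})
    (hsum : ∑ i ∈ s, y i = 0) : ∀ i ∈ s, y i = 0 := by
  by_contra! ⟨j, hjs, hj⟩
  obtain ⟨i₀, hi₀s, hi₀max⟩ := s.exists_max_image (fun i => val Zb (y i)) ⟨j, hjs⟩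
  obtain ⟨m, hm⟩ := WithBot.ne_bot_iff_exists.mp
    (ne_bot_of_le_ne_bot (mt Zb.val_eq_bot_iff.mp hj) (hi₀max j hjs))
  have hi₀ : y i₀ ≠ 0 := mt Zb.val_eq_bot_iff.mpr (hm ▸ WithBot.coe_ne_bot)
  have hlt : ∀ i ∈ s, i ≠ i₀ → val Zb (y i) < m := by
    refine fun i his hne => (hm ▸ hi₀max i his).lt_of_ne fun heq => ?_
    by_cases hi : y i = 0
    · exact WithBot.bot_ne_coe (Zb.val_eq_bot_iff.mpr hi ▸ heq)
    · exact hne (hinj ⟨his, hi⟩ ⟨hi₀s, hi₀⟩ (heq.trans hm))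
  -- the leading coefficient of `y i₀` is not cancelled by any other summand
  have hcoeff : Zb.repr (∑ i ∈ s, y i) m = Zb.repr (y i₀) m := by
    rw [map_sum, Finsupp.finsetSum_apply]
    exact Finset.sum_eq_single_of_mem i₀ hi₀s fun i his hne =>
      Zb.repr_eq_zero_of_val_lt (hlt i his hne)
  rw [hsum, map_zero, Finsupp.zero_apply] at hcoeff
  exact Zb.repr_val_ne_zero hm.symm hcoeff.symm

end Module.Basis

/-- With `B` a quantum torus over `ℂ` with basis `(Z k)_{k ∈ Γ}` indexed by a
linearly ordered additive group `Γ`, let `Γ⁰ ≤ Γ` be a subgroup, `ZA ⊆ B` a `ℂ`-subalgebra all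
of whose nonzero elements have valuation in `Γ⁰`, and `x 1, …, x R` nonzero elements of `B`
whose valuations lie in pairwise distinct cosets of `Γ⁰`.  Then the `x i` are left linearly
independent over `ZA`: any relation `∑ z i * x i = 0` with `z i ∈ ZA` forces all `z i = 0`. -/
theorem left_linear_independence_of_distinct_cosets {Γ : Type*} [AddCommGroup Γ] [LinearOrder Γ] [IsOrderedAddMonoid Γ]
    {B : Type*} [Ring B] [Algebra ℂ B] (Zb : Module.Basis Γ ℂ B)
    (c : Γ → Γ → ℂ) (hc : ∀ k l, c k l ≠ 0)
    (hmul : ∀ k l, Zb k * Zb l = c k l • Zb (k + l))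
    (Γ0 : AddSubgroup Γ)
    (ZA : Subalgebra ℂ B)
    (hZA : ∀ z ∈ ZA, z ≠ 0 → ∃ g ∈ Γ0, val Zb z = (g : WithBot Γ))
    (R : ℕ) (x : Fin R → B) (hx : ∀ i, x i ≠ 0)
    (hdist : ∀ i j : Fin R, i ≠ j → ∀ gi gj : Γ,
      val Zb (x i) = (gi : WithBot Γ) → val Zb (x j) = (gj : WithBot Γ) → gi - gj ∉ Γ0)
    (z : Fin R → B) (hz : ∀ i, z i ∈ ZA)
    (hsum : ∑ i, z i * x i = 0) :
    ∀ i, z i = 0 := by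
  have hval_x : ∀ i, ∃ k : Γ, val Zb (x i) = k := fun i =>
    (WithBot.ne_bot_iff_exists.mp (mt Zb.val_eq_bot_iff.mp (hx i))).imp fun _ => Eq.symm
  have hinj : Set.InjOn (fun i => val Zb (z i * x i)) {i | i ∈ Finset.univ ∧ z i * x i ≠ 0} := by
    rintro i ⟨-, hi⟩ j ⟨-, hj⟩ heq
    by_contra hne
    obtain ⟨gi, hgi, hzi⟩ := hZA _ (hz i) (left_ne_zero_of_mul hi)
    obtain ⟨gj, hgj, hzj⟩ := hZA _ (hz j) (left_ne_zero_of_mul hj)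
    obtain ⟨ki, hxi⟩ := hval_x i
    obtain ⟨kj, hxj⟩ := hval_x j
    exact Zb.val_mul_ne_of_sub_notMem hc hmul hgi hgj hzi hzj hxi hxj
      (hdist i j hne ki kj hxi hxj) heq
  have := Zb.noZeroDivisors hc hmul
  intro i
  exact (mul_eq_zero.mp (Zb.eq_zero_of_sum_eq_zero_of_injOn_val hinj hsum i
    (Finset.mem_univ i))).resolve_right (hx i)
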